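/- Fix U* ∈ [0,1]^n that is non-decreasing in j and satisfies U*_j = U*_k whenever φ_j = φ_k, and suppose λ > 0 is such that A*_j := min{1, λ/√(φ_j)} satisfies the budget equality Σ_{j=1}^{n} (1−U*_j)·A*_j·ψ_j = B. Then A* minimizes Σ_{j=1}^{n} (1−U*_j)/A_j over all A with 0 < A_j ≤ 1 for all j, (1−U*_j)·A_j non-increasing in j, and Σ_{j=1}^{n} (1−U*_j)·A_j·ψ_j ≤ B; that is, for every such A, Σ_{j=1}^{n} (1−U*_j)/A*_j ≤ Σ_{j=1}^{n} (1−U*_j)/A_j. -/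

import Mathlib

/-!
`φ` is the ironed version of `ψ`: its partial sums `Σ_{t ≤ m} φ_t` never exceed those of
`ψ`, and the two agree at `m = n` and at every `m` where `φ` jumps. Abel summation turns these
facts into `Σ x_j φ_j ≤ Σ x_j ψ_j` for every non-increasing `x ≥ 0`, with equality when `x` is
constant on the level sets of `φ`. Hence replacing `ψ` by `φ` keeps `A` within budget and `A*`
on it. Finally `A*` satisfies the KKT conditions of the convex problem `min Σ (1 - U_j) / A_j`
with multiplier `1 / λ²`, so the tangent-line bound for `1 / A` at `A*_j` summed with weights
`φ_j` proves optimality.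
-/

/-- Virtual cost of the uniform distribution over `{c 1, …, c n}`:
`ψ j = j·c j − (j−1)·c (j−1)`. -/
noncomputable def vc (c : ℕ → ℝ) (j : ℕ) : ℝ :=
  (j : ℝ) * c j - ((j : ℝ) - 1) * c (j - 1)

/-- `Avg(l,k) = (1/(k−l+1))·Σ_{t=l}^{k} ψ_t`. -/
noncomputable def avg (c : ℕ → ℝ) (l k : ℕ) : ℝ :=
  (∑ t ∈ Finset.Icc l k, vc c t) / ((k : ℝ) - (l : ℝ) + 1)

/-- `ψ'_l = min_{l ≤ k ≤ n} Avg(l,k)`. -/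
noncomputable def rvcAux (n : ℕ) (c : ℕ → ℝ) (l : ℕ) : ℝ :=
  sInf {x | ∃ k, l ≤ k ∧ k ≤ n ∧ x = avg c l k}

/-- Regularized virtual cost: `φ_j = max_{1 ≤ l ≤ j} ψ'_l`. -/
noncomputable def rvc (n : ℕ) (c : ℕ → ℝ) (j : ℕ) : ℝ :=
  sSup {x | ∃ l, 1 ≤ l ∧ l ≤ j ∧ x = rvcAux n c l}

/-- A pair `(A, U)` is feasible: `0 < A_j ≤ 1`, `0 ≤ U_j ≤ 1`, the sequence
`(1−U_j)·A_j` is non-increasing, and the expected spending is within `B`. -/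
def FeasPair (n : ℕ) (c : ℕ → ℝ) (B : ℝ) (A U : ℕ → ℝ) : Prop :=
  (∀ j, 1 ≤ j → j ≤ n → 0 < A j ∧ A j ≤ 1 ∧ 0 ≤ U j ∧ U j ≤ 1) ∧
    (∀ j, 1 ≤ j → j < n → (1 - U (j + 1)) * A (j + 1) ≤ (1 - U j) * A j) ∧
    ∑ j ∈ Finset.Icc 1 n, (1 - U j) * A j * vc c j ≤ B

/-- The objective
`V(A,U) = β²·(1/n)·Σ (1−U_j)/A_j + ((1/n)·Σ U_j)²`. -/
noncomputable def objV (n : ℕ) (c : ℕ → ℝ) (β : ℝ) (A U : ℕ → ℝ) : ℝ :=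
  β ^ 2 * (1 / (n : ℝ)) * (∑ j ∈ Finset.Icc 1 n, (1 - U j) / A j) +
    ((1 / (n : ℝ)) * ∑ j ∈ Finset.Icc 1 n, U j) ^ 2

/-- A feasible pair is optimal if it minimizes the objective over all
feasible pairs. -/
def OptimalPair (n : ℕ) (c : ℕ → ℝ) (B β : ℝ) (A U : ℕ → ℝ) : Prop :=
  FeasPair n c B A U ∧
    ∀ A' U', FeasPair n c B A' U' → objV n c β A U ≤ objV n c β A' U'

open Finset

theorem Finset.sum_Icc_consecutive {M : Type*} [AddCommMonoid M] (f : ℕ → M) {l m k : ℕ}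
    (hlm : l ≤ m + 1) (hmk : m ≤ k) :
    ∑ t ∈ Icc l k, f t = ∑ t ∈ Icc l m, f t + ∑ t ∈ Icc (m + 1) k, f t := by
  simp only [← Ico_add_one_right_eq_Icc]
  exact (sum_Ico_consecutive f hlm (by omega)).symm

theorem Nat.cast_card_Icc {R : Type*} [AddCommGroupWithOne R] {l m : ℕ} (h : l ≤ m + 1) :
    ((Icc l m).card : R) = m - l + 1 := by
  rw [Nat.card_Icc, Nat.cast_sub h, Nat.cast_add, Nat.cast_one]
  abel

section Abel

variable {R : Type*} [CommRing R]

theorem sum_Icc_mul_eq_abel (x d : ℕ → R) (n : ℕ) :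
    ∑ t ∈ Icc 1 n, x t * d t =
      x n * ∑ t ∈ Icc 1 n, d t + ∑ m ∈ Ico 1 n, (x m - x (m + 1)) * ∑ t ∈ Icc 1 m, d t := by
  induction n with
  | zero => simp
  | succ n ih =>
    rcases Nat.eq_zero_or_pos n with rfl | hn
    · simp
    · rw [sum_Icc_succ_top (by omega), sum_Icc_succ_top (by omega), sum_Ico_succ_top hn, ih]
      ring

variable {x d : ℕ → R} {n : ℕ}

theorem sum_Icc_mul_nonneg [PartialOrder R] [IsOrderedRing R]
    (hd : ∀ m ≤ n, 0 ≤ ∑ t ∈ Icc 1 m, d t)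
    (hx : ∀ m, 1 ≤ m → m < n → x (m + 1) ≤ x m) (hxn : 0 ≤ x n) :
    0 ≤ ∑ t ∈ Icc 1 n, x t * d t := by
  rw [sum_Icc_mul_eq_abel]
  refine add_nonneg (mul_nonneg hxn (hd n le_rfl)) (sum_nonneg fun m hm => ?_)
  rw [mem_Ico] at hm
  exact mul_nonneg (sub_nonneg.2 (hx m hm.1 hm.2)) (hd m hm.2.le)

theorem sum_Icc_mul_eq_zero (hd : ∑ t ∈ Icc 1 n, d t = 0)
    (hx : ∀ m, 1 ≤ m → m < n → ∑ t ∈ Icc 1 m, d t = 0 ∨ x m = x (m + 1)) :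
    ∑ t ∈ Icc 1 n, x t * d t = 0 := by
  rw [sum_Icc_mul_eq_abel, hd, mul_zero, zero_add]
  refine sum_eq_zero fun m hm => ?_
  rw [mem_Ico] at hm
  rcases hx m hm.1 hm.2 with h | h <;> simp [h]

end Abel

section IronedCost

variable {n : ℕ} {c : ℕ → ℝ} {j l m k : ℕ}

theorem sum_Icc_vc_eq_card_nsmul_avg (hlk : l ≤ k) :
    ∑ t ∈ Icc l k, vc c t = (Icc l k).card • avg c l k := by
  have hlk' : (l : ℝ) ≤ k := by exact_mod_cast hlk
  rw [nsmul_eq_mul, Nat.cast_card_Icc (by omega), avg, mul_div_cancel₀ _ (by linarith)]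

theorem sum_Icc_one_vc (c : ℕ → ℝ) (k : ℕ) : ∑ t ∈ Icc 1 k, vc c t = k * c k := by
  induction k with
  | zero => simp
  | succ k ih =>
    rw [sum_Icc_succ_top (by omega), ih, vc, Nat.add_sub_cancel]
    push_cast
    ring

theorem avg_one (hk : 1 ≤ k) : avg c 1 k = c k := by
  have hk' : (1 : ℝ) ≤ k := by exact_mod_cast hk
  rw [avg, sum_Icc_one_vc, Nat.cast_one, sub_add_cancel, mul_div_cancel_left₀ _ (by linarith)]

theorem finite_setOf_avg (n : ℕ) (c : ℕ → ℝ) (l : ℕ) :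
    {x | ∃ k, l ≤ k ∧ k ≤ n ∧ x = avg c l k}.Finite :=
  ((Set.finite_Icc l n).image (avg c l)).subset <| by
    rintro _ ⟨k, hlk, hkn, rfl⟩
    exact ⟨k, ⟨hlk, hkn⟩, rfl⟩

theorem finite_setOf_rvcAux (n : ℕ) (c : ℕ → ℝ) (j : ℕ) :
    {x | ∃ l, 1 ≤ l ∧ l ≤ j ∧ x = rvcAux n c l}.Finite :=
  ((Set.finite_Icc 1 j).image (rvcAux n c)).subset <| by
    rintro _ ⟨l, hl, hlj, rfl⟩
    exact ⟨l, ⟨hl, hlj⟩, rfl⟩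

theorem rvcAux_le_avg (hlk : l ≤ k) (hkn : k ≤ n) : rvcAux n c l ≤ avg c l k :=
  csInf_le (finite_setOf_avg n c l).bddBelow ⟨k, hlk, hkn, rfl⟩

theorem exists_rvcAux_eq_avg (hln : l ≤ n) :
    ∃ k, l ≤ k ∧ k ≤ n ∧ rvcAux n c l = avg c l k :=
  Set.Nonempty.csInf_mem (s := {x | ∃ k, l ≤ k ∧ k ≤ n ∧ x = avg c l k})
    ⟨_, l, le_rfl, hln, rfl⟩ (finite_setOf_avg n c l)

theorem rvcAux_le_rvc (hl : 1 ≤ l) (hlj : l ≤ j) : rvcAux n c l ≤ rvc n c j :=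
  le_csSup (finite_setOf_rvcAux n c j).bddAbove ⟨l, hl, hlj, rfl⟩

theorem exists_rvc_eq_rvcAux (hj : 1 ≤ j) :
    ∃ l, 1 ≤ l ∧ l ≤ j ∧ rvc n c j = rvcAux n c l :=
  Set.Nonempty.csSup_mem (s := {x | ∃ l, 1 ≤ l ∧ l ≤ j ∧ x = rvcAux n c l})
    ⟨_, 1, le_rfl, hj, rfl⟩ (finite_setOf_rvcAux n c j)

theorem rvc_mono (hj : 1 ≤ j) (hjk : j ≤ k) : rvc n c j ≤ rvc n c k := by
  obtain ⟨l, hl, hlj, h⟩ := exists_rvc_eq_rvcAux (n := n) (c := c) hj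
  exact h ▸ rvcAux_le_rvc hl (hlj.trans hjk)

theorem rvc_pos (hc : ∀ k, 1 ≤ k → k ≤ n → 0 < c k) (hj : 1 ≤ j) (hjn : j ≤ n) :
    0 < rvc n c j := by
  obtain ⟨k, hk, hkn, h⟩ := exists_rvcAux_eq_avg (c := c) (hj.trans hjn)
  rw [avg_one hk] at h
  exact (hc k hk hkn).trans_le (h.symm.le.trans (rvcAux_le_rvc le_rfl hj))

theorem rvc_lt_rvcAux_succ (h : rvc n c m < rvc n c (m + 1)) :
    rvc n c m < rvcAux n c (m + 1) := by
  obtain ⟨l, hl, hlm, heq⟩ := exists_rvc_eq_rvcAux (n := n) (c := c) (Nat.le_add_left 1 m)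
  rcases (show l ≤ m ∨ l = m + 1 by omega) with hlm' | rfl
  · exact absurd (heq ▸ rvcAux_le_rvc hl hlm') h.not_ge
  · exact heq ▸ h

theorem sum_Icc_rvc_le_sum_Icc_vc (hm : m ≤ n) :
    ∑ t ∈ Icc 1 m, rvc n c t ≤ ∑ t ∈ Icc 1 m, vc c t := by
  induction m using Nat.strong_induction_on with
  | _ m ih =>
  rcases Nat.eq_zero_or_pos m with rfl | hm0
  · simp
  obtain ⟨l, hl, hlm, hφ⟩ := exists_rvc_eq_rvcAux (n := n) (c := c) hm0
  have hblock : ∑ t ∈ Icc l m, rvc n c t ≤ ∑ t ∈ Icc l m, vc c t := calc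
    _ ≤ (Icc l m).card • rvc n c m :=
      sum_le_card_nsmul _ _ _ fun t ht => rvc_mono (hl.trans (mem_Icc.1 ht).1) (mem_Icc.1 ht).2
    _ ≤ (Icc l m).card • avg c l m := hφ ▸ nsmul_le_nsmul_right (rvcAux_le_avg hlm hm) _
    _ = _ := (sum_Icc_vc_eq_card_nsmul_avg hlm).symm
  have hsplit (f : ℕ → ℝ) :
      ∑ t ∈ Icc 1 m, f t = ∑ t ∈ Icc 1 (l - 1), f t + ∑ t ∈ Icc l m, f t := by
    rw [sum_Icc_consecutive f (by omega : 1 ≤ l - 1 + 1) (by omega : l - 1 ≤ m),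
      Nat.sub_add_cancel hl]
  rw [hsplit, hsplit]
  exact add_le_add (ih (l - 1) (by omega) (by omega)) hblock

/-- `avg c l k` is a weighted mean of `avg c l m` and `avg c (m + 1) k`. Being the least average
starting at `l`, it is at most the first, hence at least the second; but a jump of `φ` at `m`
would push every average starting at `m + 1` above `rvc n c m ≥ rvcAux n c l`. -/
theorem rvc_succ_le_of_rvcAux_eq_avg (hl : 1 ≤ l) (hlm : l ≤ m) (hmk : m < k) (hkn : k ≤ n)
    (hk : rvcAux n c l = avg c l k) : rvc n c (m + 1) ≤ rvc n c m := by
  by_contra! h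
  have h1 := rvc_lt_rvcAux_succ h
  have h2 := rvcAux_le_avg (c := c) hmk hkn
  have h3 := rvcAux_le_rvc (n := n) (c := c) hl hlm
  have h4 := rvcAux_le_avg (c := c) hlm (hmk.le.trans hkn)
  have hsplit := sum_Icc_consecutive (vc c) (by omega : l ≤ m + 1) hmk.le
  rw [sum_Icc_vc_eq_card_nsmul_avg (hlm.trans hmk.le), sum_Icc_vc_eq_card_nsmul_avg hlm,
    sum_Icc_vc_eq_card_nsmul_avg hmk] at hsplit
  simp only [nsmul_eq_mul, Nat.cast_card_Icc (R := ℝ) (by omega : l ≤ m + 1),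
    Nat.cast_card_Icc (R := ℝ) (by omega : l ≤ k + 1),
    Nat.cast_card_Icc (R := ℝ) (by omega : m + 1 ≤ k + 1)] at hsplit
  have hlm' : (l : ℝ) ≤ m := by exact_mod_cast hlm
  have hmk' : (m : ℝ) + 1 ≤ k := by exact_mod_cast hmk
  push_cast at hsplit
  nlinarith

theorem sum_Icc_vc_le_sum_Icc_rvc (hm : m ≤ n) (hjump : m = n ∨ rvc n c m < rvc n c (m + 1))
    {l : ℕ} (hl : 1 ≤ l) (hlm : l ≤ m + 1) :
    ∑ t ∈ Icc l m, vc c t ≤ ∑ t ∈ Icc l m, rvc n c t := by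
  rcases hlm.eq_or_lt with rfl | hlm'
  · simp
  obtain ⟨k, hlk, hkn, hk⟩ := exists_rvcAux_eq_avg (c := c) (by omega : l ≤ n)
  have hkm : k ≤ m := by
    rcases hjump with rfl | hlt
    · exact hkn
    by_contra! hmk
    exact (rvc_succ_le_of_rvcAux_eq_avg hl (by omega) hmk hkn hk).not_gt hlt
  have hblock : ∑ t ∈ Icc l k, vc c t ≤ ∑ t ∈ Icc l k, rvc n c t := calc
    _ = (Icc l k).card • rvcAux n c l := by rw [sum_Icc_vc_eq_card_nsmul_avg hlk, hk]
    _ ≤ _ := card_nsmul_le_sum _ _ _ fun t ht => rvcAux_le_rvc hl (mem_Icc.1 ht).1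
  rw [sum_Icc_consecutive _ (by omega : l ≤ k + 1) hkm,
    sum_Icc_consecutive (rvc n c) (by omega) hkm]
  exact add_le_add hblock (sum_Icc_vc_le_sum_Icc_rvc hm hjump (by omega) (by omega))
termination_by m + 1 - l

theorem sum_Icc_rvc_eq_sum_Icc_vc (hm : m ≤ n) (hjump : m = n ∨ rvc n c m < rvc n c (m + 1)) :
    ∑ t ∈ Icc 1 m, rvc n c t = ∑ t ∈ Icc 1 m, vc c t :=
  (sum_Icc_rvc_le_sum_Icc_vc hm).antisymm (sum_Icc_vc_le_sum_Icc_rvc hm hjump le_rfl (by omega))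

theorem sum_mul_rvc_le_sum_mul_vc {x : ℕ → ℝ} (hx : ∀ m, 1 ≤ m → m < n → x (m + 1) ≤ x m)
    (hxn : 0 ≤ x n) : ∑ t ∈ Icc 1 n, x t * rvc n c t ≤ ∑ t ∈ Icc 1 n, x t * vc c t := by
  have h := sum_Icc_mul_nonneg (d := fun t => vc c t - rvc n c t)
    (fun m hm => by
      simpa only [sum_sub_distrib, sub_nonneg] using sum_Icc_rvc_le_sum_Icc_vc hm) hx hxn
  simpa only [mul_sub, sum_sub_distrib, sub_nonneg] using h

theorem sum_mul_rvc_eq_sum_mul_vc {x : ℕ → ℝ}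
    (hx : ∀ m, 1 ≤ m → m < n → rvc n c m = rvc n c (m + 1) → x m = x (m + 1)) :
    ∑ t ∈ Icc 1 n, x t * rvc n c t = ∑ t ∈ Icc 1 n, x t * vc c t := by
  have h := sum_Icc_mul_eq_zero (x := x) (d := fun t => vc c t - rvc n c t)
    (by rw [sum_sub_distrib, sum_Icc_rvc_eq_sum_Icc_vc le_rfl (Or.inl rfl), sub_self])
    fun m hm hmn => by
      rcases (rvc_mono (n := n) (c := c) hm m.le_succ).eq_or_lt with h | h
      · exact Or.inr (hx m hm hmn h)
      · left
        rw [sum_sub_distrib, sum_Icc_rvc_eq_sum_Icc_vc hmn.le (Or.inr h), sub_self]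
  simp only [mul_sub, sum_sub_distrib, sub_eq_zero] at h
  exact h.symm

end IronedCost

theorem mul_sub_div_sq_le_div_sub_div {w a b : ℝ} (hw : 0 ≤ w) (ha : 0 < a) (hb : 0 < b) :
    w * (b - a) / b ^ 2 ≤ w / a - w / b := by
  have h : w / a - w / b - w * (b - a) / b ^ 2 = w * (b - a) ^ 2 / (a * b ^ 2) := by
    field_simp
  have : 0 ≤ w * (b - a) ^ 2 / (a * b ^ 2) := by positivity
  linarith

theorem mul_div_sub_mul_div_le_div_sub_div_min {w a φ lam : ℝ} (hw : 0 ≤ w) (ha : 0 < a)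
    (ha1 : a ≤ 1) (hφ : 0 < φ) (hlam : 0 < lam) :
    w * min 1 (lam / √φ) * φ / lam ^ 2 - w * a * φ / lam ^ 2 ≤
      w / a - w / min 1 (lam / √φ) := by
  have hs : 0 < √φ := Real.sqrt_pos.2 hφ
  refine le_trans ?_ (mul_sub_div_sq_le_div_sub_div hw ha (lt_min one_pos (div_pos hlam hs)))
  rcases le_total 1 (lam / √φ) with h | h
  · rw [min_eq_left h]
    have hφlam : φ / lam ^ 2 ≤ 1 := by
      rw [one_le_div hs] at h
      rw [div_le_one (by positivity), ← Real.sq_sqrt hφ.le]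
      gcongr
    have : 0 ≤ w * (1 - a) := mul_nonneg hw (by linarith)
    calc w * 1 * φ / lam ^ 2 - w * a * φ / lam ^ 2 = φ / lam ^ 2 * (w * (1 - a)) := by ring
      _ ≤ w * (1 - a) := mul_le_of_le_one_left this hφlam
      _ = w * (1 - a) / 1 ^ 2 := by ring
  · rw [min_eq_right h]
    apply le_of_eq
    field_simp
    rw [Real.sq_sqrt hφ.le]

theorem stmt17_general (n : ℕ) (hn : 1 ≤ n) (c : ℕ → ℝ) (hc1 : 0 < c 1)
    (hmono : ∀ a b, a ≤ b → b ≤ n → c a ≤ c b)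
    (B : ℝ)
    (U : ℕ → ℝ) (hU : ∀ j, 1 ≤ j → j ≤ n → 0 ≤ U j ∧ U j ≤ 1)
    (hUlevel : ∀ j k, 1 ≤ j → j ≤ n → 1 ≤ k → k ≤ n →
      rvc n c j = rvc n c k → U j = U k)
    (lam : ℝ) (hlam : 0 < lam)
    (Astar : ℕ → ℝ)
    (hAstar : ∀ j, 1 ≤ j → j ≤ n → Astar j = min 1 (lam / Real.sqrt (rvc n c j)))
    (hbudget : ∑ j ∈ Finset.Icc 1 n, (1 - U j) * Astar j * vc c j = B) :
    ∀ A : ℕ → ℝ,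
      (∀ j, 1 ≤ j → j ≤ n → 0 < A j ∧ A j ≤ 1) →
      (∀ j, 1 ≤ j → j < n → (1 - U (j + 1)) * A (j + 1) ≤ (1 - U j) * A j) →
      (∑ j ∈ Finset.Icc 1 n, (1 - U j) * A j * vc c j ≤ B) →
      ∑ j ∈ Finset.Icc 1 n, (1 - U j) / Astar j ≤
        ∑ j ∈ Finset.Icc 1 n, (1 - U j) / A j := by
  intro A hA hAmono hAbud
  have hspend : ∑ j ∈ Icc 1 n, (1 - U j) * A j * rvc n c j ≤
      ∑ j ∈ Icc 1 n, (1 - U j) * Astar j * rvc n c j := calc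
    _ ≤ ∑ j ∈ Icc 1 n, (1 - U j) * A j * vc c j :=
      sum_mul_rvc_le_sum_mul_vc hAmono
        (mul_nonneg (by linarith [hU n hn le_rfl]) (hA n hn le_rfl).1.le)
    _ ≤ ∑ j ∈ Icc 1 n, (1 - U j) * Astar j * vc c j := hbudget ▸ hAbud
    _ = _ := (sum_mul_rvc_eq_sum_mul_vc fun m hm hmn h => by
      rw [hUlevel m (m + 1) hm hmn.le (by omega) hmn h, hAstar m hm hmn.le,
        hAstar (m + 1) (by omega) hmn, h]).symm
  have htangent : ∀ j ∈ Icc 1 n,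
      (1 - U j) * Astar j * rvc n c j / lam ^ 2 - (1 - U j) * A j * rvc n c j / lam ^ 2 ≤
        (1 - U j) / A j - (1 - U j) / Astar j := fun j hj => by
    obtain ⟨h1, h2⟩ := mem_Icc.1 hj
    rw [hAstar j h1 h2]
    exact mul_div_sub_mul_div_le_div_sub_div_min (by linarith [hU j h1 h2]) (hA j h1 h2).1
      (hA j h1 h2).2 (rvc_pos (fun k hk hkn => hc1.trans_le (hmono 1 k hk hkn)) h1 h2) hlam
  have hsum := sum_le_sum htangent
  simp only [sum_sub_distrib, ← sum_div] at hsum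
  have hspend' := div_le_div_of_nonneg_right hspend (sq_nonneg lam)
  linarith

/-- for fixed `U*` (non-decreasing and constant on level sets of
`φ`), the allocation `A*_j = min{1, λ/√φ_j}` exhausting the budget minimizes
`Σ (1−U*_j)/A_j` over all constrained allocations. -/
theorem stmt17 (n : ℕ) (hn : 1 ≤ n) (c : ℕ → ℝ) (hc0 : c 0 = 0) (hc1 : 0 < c 1)
    (hmono : ∀ a b, a ≤ b → b ≤ n → c a ≤ c b)
    (B : ℝ) (hB : 0 < B)
    (U : ℕ → ℝ) (hU : ∀ j, 1 ≤ j → j ≤ n → 0 ≤ U j ∧ U j ≤ 1)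
    (hUmono : ∀ j, 1 ≤ j → j < n → U j ≤ U (j + 1))
    (hUlevel : ∀ j k, 1 ≤ j → j ≤ n → 1 ≤ k → k ≤ n →
      rvc n c j = rvc n c k → U j = U k)
    (lam : ℝ) (hlam : 0 < lam)
    (Astar : ℕ → ℝ)
    (hAstar : ∀ j, 1 ≤ j → j ≤ n → Astar j = min 1 (lam / Real.sqrt (rvc n c j)))
    (hbudget : ∑ j ∈ Finset.Icc 1 n, (1 - U j) * Astar j * vc c j = B) :
    ∀ A : ℕ → ℝ,
      (∀ j, 1 ≤ j → j ≤ n → 0 < A j ∧ A j ≤ 1) →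
      (∀ j, 1 ≤ j → j < n → (1 - U (j + 1)) * A (j + 1) ≤ (1 - U j) * A j) →
      (∑ j ∈ Finset.Icc 1 n, (1 - U j) * A j * vc c j ≤ B) →
      ∑ j ∈ Finset.Icc 1 n, (1 - U j) / Astar j ≤
        ∑ j ∈ Finset.Icc 1 n, (1 - U j) / A j :=
  stmt17_general n hn c hc1 hmono B U hU hUlevel lam hlam Astar hAstar hbudget
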